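/- arXiv:2201.12251 — 6 statements merged into one kernel-verified Lean document; each statement's English description precedes it below -/
import Mathlib

section
/- Let (X, d_X, ν_X) and (Y, d_Y, ν_Y) be compact metric spaces equipped with Borel probability measures, and suppose their Gromov–Hausdorff–Prokhorov distance is strictly less than ε' > 0. Then for every ε > 0, the supremum over x ∈ X of ν_X of the open ε-ball around x is at most the supremum over y ∈ Y of ν_Y of the open (ε + 2ε')-ball around y, plus ε'. -/
open MeasureTheory Metric Set

/-!
Pick `y` with `ψ y` within `ε'` of `φ x` (Hausdorff distance). The Lévy–Prokhorov bound gives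
`νX (ball x ε) ≤ νY (ψ ⁻¹' (ε'-thickening of ball (φ x) ε)) + ε'`, and by the triangle inequality
that thickening lies in `ball (ψ y) (ε + 2ε')`, whose `ψ`-preimage is `ball y (ε + 2ε')`.
-/

lemma thickening_ball_subset_ball {Z : Type*} [PseudoMetricSpace Z] {z w : Z} {r : ℝ}
    (hzw : dist z w < r) (δ ε : ℝ) :
    thickening δ (ball z ε) ⊆ ball w (ε + δ + r) :=
  (thickening_ball z δ ε).trans <| ball_subset_ball' (by linarith)

lemma measure_ball_le_of_levyProkhorovEDist_lt {Z : Type*} [PseudoMetricSpace Z]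
    [MeasurableSpace Z] [OpensMeasurableSpace Z] {μ ν : Measure Z} {δ : ℝ}
    (h : levyProkhorovEDist μ ν < ENNReal.ofReal δ) {z w : Z} {r : ℝ} (hzw : dist z w < r)
    (ε : ℝ) :
    μ (ball z ε) ≤ ν (ball w (ε + δ + r)) + ENNReal.ofReal δ := by
  have hδ : 0 ≤ δ := (ENNReal.ofReal_pos.1 (zero_le.trans_lt h)).le
  calc μ (ball z ε)
      ≤ ν (thickening (ENNReal.ofReal δ).toReal (ball z ε)) + ENNReal.ofReal δ :=
        left_measure_le_of_levyProkhorovEDist_lt h measurableSet_ball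
    _ ≤ ν (ball w (ε + δ + r)) + ENNReal.ofReal δ := by
        rw [ENNReal.toReal_ofReal hδ]
        gcongr
        exact thickening_ball_subset_ball hzw δ ε

lemma measure_ball_le_of_levyProkhorovEDist_map_lt {X Y Z : Type*}
    [PseudoMetricSpace X] [MeasurableSpace X] [OpensMeasurableSpace X]
    [PseudoMetricSpace Y] [MeasurableSpace Y] [OpensMeasurableSpace Y]
    [PseudoMetricSpace Z] [MeasurableSpace Z] [BorelSpace Z]
    {μ : Measure X} {ν : Measure Y} {φ : X → Z} {ψ : Y → Z} (hφ : Isometry φ) (hψ : Isometry ψ)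
    {δ : ℝ} (h : levyProkhorovEDist (μ.map φ) (ν.map ψ) < ENNReal.ofReal δ)
    {x : X} {y : Y} {r : ℝ} (hxy : dist (φ x) (ψ y) < r) (ε : ℝ) :
    μ (ball x ε) ≤ ν (ball y (ε + δ + r)) + ENNReal.ofReal δ := by
  rw [← hφ.preimage_ball, ← hψ.preimage_ball,
    ← Measure.map_apply hφ.continuous.measurable measurableSet_ball,
    ← Measure.map_apply hψ.continuous.measurable measurableSet_ball]
  exact measure_ball_le_of_levyProkhorovEDist_lt h hxy ε

lemma exists_dist_lt_of_hausdorffDist_range_lt {X Y Z : Type*}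
    [TopologicalSpace X] [CompactSpace X] [TopologicalSpace Y] [CompactSpace Y] [Nonempty Y]
    [PseudoMetricSpace Z] {φ : X → Z} {ψ : Y → Z} (hφ : Continuous φ) (hψ : Continuous ψ)
    {r : ℝ} (h : hausdorffDist (range φ) (range ψ) < r) (x : X) :
    ∃ y, dist (φ x) (ψ y) < r := by
  have hfin : hausdorffEDist (range φ) (range ψ) ≠ ⊤ :=
    hausdorffEDist_ne_top_of_nonempty_of_bounded ⟨φ x, mem_range_self x⟩ (range_nonempty ψ)
      (isCompact_range hφ).isBounded (isCompact_range hψ).isBounded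
  obtain ⟨_, ⟨y, rfl⟩, hy⟩ := exists_dist_lt_of_hausdorffDist_lt (mem_range_self x) h hfin
  exact ⟨y, hy⟩

theorem largest_ball_mass_GHP_bound_general
    (X Y : Type) [MetricSpace X] [CompactSpace X] [MetricSpace Y] [CompactSpace Y]
    [MeasurableSpace X] [BorelSpace X] [MeasurableSpace Y] [BorelSpace Y]
    (νX : Measure X) (νY : Measure Y)
    [IsProbabilityMeasure νX] [IsProbabilityMeasure νY]
    (ε' : ℝ)
    (h : ∃ (Z : Type) (_ : MetricSpace Z) (_ : MeasurableSpace Z) (_ : BorelSpace Z)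
        (φ : X → Z) (ψ : Y → Z), Isometry φ ∧ Isometry ψ ∧
        hausdorffDist (Set.range φ) (Set.range ψ) < ε' ∧
        levyProkhorovDist (νX.map φ) (νY.map ψ) < ε')
    (ε : ℝ) :
    (⨆ x : X, νX (Metric.ball x ε)) ≤
      (⨆ y : Y, νY (Metric.ball y (ε + 2 * ε'))) + ENNReal.ofReal ε' := by
  obtain ⟨Z, _, _, _, φ, ψ, hφ, hψ, hH, hLP⟩ := h
  have := nonempty_of_isProbabilityMeasure νY
  have hLP' : levyProkhorovEDist (νX.map φ) (νY.map ψ) < ENNReal.ofReal ε' :=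
    (ENNReal.lt_ofReal_iff_toReal_lt (levyProkhorovEDist_ne_top _ _)).2 hLP
  refine iSup_le fun x => ?_
  obtain ⟨y, hy⟩ := exists_dist_lt_of_hausdorffDist_range_lt hφ.continuous hψ.continuous hH x
  calc νX (ball x ε)
      ≤ νY (ball y (ε + ε' + ε')) + ENNReal.ofReal ε' :=
        measure_ball_le_of_levyProkhorovEDist_map_lt hφ hψ hLP' hy ε
    _ ≤ (⨆ y : Y, νY (ball y (ε + 2 * ε'))) + ENNReal.ofReal ε' := by
        rw [add_assoc, ← two_mul]
        gcongr
        exact le_iSup (fun y => νY (ball y (ε + 2 * ε'))) y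

/-- If the GHP distance of two compact metric probability spaces is `< ε'`
(witnessed by isometric embeddings into a common space), then the largest mass
of open `ε`-balls in `X` is at most that of open `(ε + 2ε')`-balls in `Y`, plus `ε'`. -/
theorem largest_ball_mass_GHP_bound
    (X Y : Type) [MetricSpace X] [CompactSpace X] [MetricSpace Y] [CompactSpace Y]
    [MeasurableSpace X] [BorelSpace X] [MeasurableSpace Y] [BorelSpace Y]
    (νX : Measure X) (νY : Measure Y)
    [IsProbabilityMeasure νX] [IsProbabilityMeasure νY]
    (ε' : ℝ) (hε' : 0 < ε')
    (h : ∃ (Z : Type) (_ : MetricSpace Z) (_ : MeasurableSpace Z) (_ : BorelSpace Z)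
        (φ : X → Z) (ψ : Y → Z), Isometry φ ∧ Isometry ψ ∧
        hausdorffDist (Set.range φ) (Set.range ψ) < ε' ∧
        levyProkhorovDist (νX.map φ) (νY.map ψ) < ε')
    (ε : ℝ) (hε : 0 < ε) :
    (⨆ x : X, νX (Metric.ball x ε)) ≤
      (⨆ y : Y, νY (Metric.ball y (ε + 2 * ε'))) + ENNReal.ofReal ε' :=
  largest_ball_mass_GHP_bound_general X Y νX νY ε' h ε
end

section
/- For each fixed ε > 0, the function on the space of (isometry classes of) compact metric spaces with Borel probability measures, sending (X, d_X, ν_X) to λ_ε^X := sup_{x ∈ X} ν_X(B_ε(x)), is lower semi-continuous with respect to the Gromov–Hausdorff–Prokhorov metric. -/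
open MeasureTheory Metric Set Filter

/-- A sequence of compact metric probability spaces converges to a limit space in the
Gromov–Hausdorff–Prokhorov sense if, for every `ε > 0`, eventually the spaces can be
isometrically embedded into a common metric space with Hausdorff distance of the images
and Prokhorov distance of the pushforward measures both `< ε`. -/
def GHPTendsto (X : ℕ → Type) [∀ n, MetricSpace (X n)]
    [∀ n, MeasurableSpace (X n)] [∀ n, BorelSpace (X n)]
    (μ : ∀ n, Measure (X n))
    (Y : Type) [MetricSpace Y] [MeasurableSpace Y] [BorelSpace Y]
    (ν : Measure Y) : Prop :=
  ∀ ε : ℝ, 0 < ε → ∀ᶠ n in atTop,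
    ∃ (Z : Type) (_ : MetricSpace Z) (_ : MeasurableSpace Z) (_ : BorelSpace Z)
      (φ : X n → Z) (ψ : Y → Z), Isometry φ ∧ Isometry ψ ∧
      hausdorffDist (Set.range φ) (Set.range ψ) < ε ∧
      levyProkhorovDist ((μ n).map φ) (ν.map ψ) < ε

/-- Lower semi-continuity of `λ_ε` with respect to GHP convergence (sequential form):
along any GHP-convergent sequence, `λ_ε` of the limit is at most the `liminf` of the
`λ_ε` of the approximating spaces. -/
theorem lambda_lowerSemicontinuous_GHP
    (ε : ℝ) (hε : 0 < ε)
    (X : ℕ → Type) [∀ n, MetricSpace (X n)] [∀ n, CompactSpace (X n)]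
    [∀ n, MeasurableSpace (X n)] [∀ n, BorelSpace (X n)]
    (μ : ∀ n, Measure (X n)) [∀ n, IsProbabilityMeasure (μ n)]
    (Y : Type) [MetricSpace Y] [CompactSpace Y] [MeasurableSpace Y] [BorelSpace Y]
    (ν : Measure Y) [IsProbabilityMeasure ν]
    (hconv : GHPTendsto X μ Y ν) :
    (⨆ y : Y, ν (Metric.ball y ε)) ≤
      Filter.liminf (fun n => ⨆ x : X n, μ n (Metric.ball x ε)) atTop := by
  set L := Filter.liminf (fun n => ⨆ x : X n, μ n (Metric.ball x ε)) atTop with hL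
  refine iSup_le fun y => ?_
  -- Main estimate: for every `δ > 0`, `ν (ball y (ε - δ)) ≤ L + ofReal δ`.
  have key : ∀ δ : ℝ, 0 < δ → ν (Metric.ball y (ε - δ)) ≤ L + ENNReal.ofReal δ := by
    intro δ hδ
    have hη : 0 < δ / 2 := by positivity
    rw [← tsub_le_iff_right]
    refine le_liminf_of_le (by isBoundedDefault) ?_
    filter_upwards [hconv (δ / 2) hη] with n hn
    rw [tsub_le_iff_right]
    obtain ⟨Z, _, _, _, φ, ψ, hφ, hψ, hH, hLP⟩ := hn
    haveI : Nonempty Y := ⟨y⟩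
    haveI : Nonempty (X n) := by
      by_contra h
      rw [not_nonempty_iff] at h
      have h1 : (μ n) univ = 1 := measure_univ
      rw [Set.univ_eq_empty_iff.mpr h, measure_empty] at h1
      exact zero_ne_one h1
    -- find a point of `range φ` close to `ψ y`
    have hfin : EMetric.hausdorffEdist (Set.range φ) (Set.range ψ) ≠ ⊤ :=
      Metric.hausdorffEdist_ne_top_of_nonempty_of_bounded (range_nonempty φ)
        (range_nonempty ψ) (isCompact_range hφ.continuous).isBounded
        (isCompact_range hψ.continuous).isBounded
    obtain ⟨z, hz, hzy⟩ :=
      Metric.exists_dist_lt_of_hausdorffDist_lt' (mem_range_self (f := ψ) y) hH hfin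
    obtain ⟨x, rfl⟩ := hz
    -- Lévy–Prokhorov estimate
    haveI : IsProbabilityMeasure ((μ n).map φ) :=
      Measure.isProbabilityMeasure_map hφ.continuous.measurable.aemeasurable
    haveI : IsProbabilityMeasure (ν.map ψ) :=
      Measure.isProbabilityMeasure_map hψ.continuous.measurable.aemeasurable
    have hedist : levyProkhorovEDist ((μ n).map φ) (ν.map ψ) < ENNReal.ofReal (δ / 2) := by
      rw [ENNReal.lt_ofReal_iff_toReal_lt (levyProkhorovEDist_ne_top _ _)]
      exact hLP
    have step := right_measure_le_of_levyProkhorovEDist_lt hedist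
      (measurableSet_ball (x := ψ y) (ε := ε - δ))
    rw [ENNReal.toReal_ofReal hη.le] at step
    have hmapν : (ν.map ψ) (Metric.ball (ψ y) (ε - δ)) = ν (Metric.ball y (ε - δ)) := by
      rw [Measure.map_apply hψ.continuous.measurable measurableSet_ball]
      congr 1
      ext w
      simp [Metric.mem_ball, hψ.dist_eq]
    have hmapμ : ((μ n).map φ) (Metric.ball (φ x) ε) = (μ n) (Metric.ball x ε) := by
      rw [Measure.map_apply hφ.continuous.measurable measurableSet_ball]
      congr 1
      ext w
      simp [Metric.mem_ball, hφ.dist_eq]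
    have hthick : Metric.thickening (δ / 2) (Metric.ball (ψ y) (ε - δ)) ⊆
        Metric.ball (φ x) ε := by
      intro w hw
      obtain ⟨v, hv, hwv⟩ := Metric.mem_thickening_iff.mp hw
      rw [Metric.mem_ball] at hv ⊢
      have h4 : dist w (φ x) ≤ dist w v + dist v (ψ y) + dist (ψ y) (φ x) :=
        dist_triangle4 w v (ψ y) (φ x)
      have h5 : dist (ψ y) (φ x) < δ / 2 := by rwa [dist_comm] at hzy
      linarith
    calc ν (Metric.ball y (ε - δ)) = (ν.map ψ) (Metric.ball (ψ y) (ε - δ)) := hmapν.symm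
      _ ≤ ((μ n).map φ) (Metric.thickening (δ / 2) (Metric.ball (ψ y) (ε - δ)))
            + ENNReal.ofReal (δ / 2) := step
      _ ≤ ((μ n).map φ) (Metric.ball (φ x) ε) + ENNReal.ofReal (δ / 2) := by
            gcongr
      _ = (μ n) (Metric.ball x ε) + ENNReal.ofReal (δ / 2) := by rw [hmapμ]
      _ ≤ (⨆ x : X n, μ n (Metric.ball x ε)) + ENNReal.ofReal δ := by
            gcongr
            · exact le_iSup (fun x : X n => μ n (Metric.ball x ε)) x
            · linarith
  -- Now let `δ → 0` using continuity from below.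
  refine ENNReal.le_of_forall_pos_le_add fun δ0 hδ0 _ => ?_
  have hcover : Metric.ball y ε = ⋃ k : ℕ, Metric.ball y (ε - 1 / (k + 1)) := by
    ext w
    simp only [mem_iUnion, Metric.mem_ball]
    constructor
    · intro h
      obtain ⟨k, hk⟩ := exists_nat_one_div_lt (sub_pos.mpr h)
      exact ⟨k, by linarith⟩
    · rintro ⟨k, hk⟩
      have hpos : (0 : ℝ) < 1 / (k + 1) := by positivity
      linarith
  have hmono : Monotone (fun k : ℕ => Metric.ball y (ε - 1 / (k + 1))) := by
    intro a b hab
    apply Metric.ball_subset_ball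
    have : (1 : ℝ) / (b + 1) ≤ 1 / (a + 1) := by
      apply one_div_le_one_div_of_le
      · positivity
      · exact_mod_cast by omega
    linarith
  rw [hcover, hmono.directed_le.measure_iUnion]
  refine iSup_le fun k => ?_
  have hδ0' : (0 : ℝ) < (δ0 : ℝ) := by exact_mod_cast hδ0
  obtain ⟨K0, hK0⟩ := exists_nat_one_div_lt hδ0'
  have hK : (1 : ℝ) / (max k K0 + 1) ≤ 1 / (K0 + 1) := by
    apply one_div_le_one_div_of_le
    · positivity
    · exact_mod_cast by omega
  calc ν (Metric.ball y (ε - 1 / (k + 1)))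
      ≤ ν (Metric.ball y (ε - 1 / (max k K0 + 1))) :=
        measure_mono (hmono (le_max_left k K0))
    _ ≤ L + ENNReal.ofReal (1 / (max k K0 + 1)) := key _ (by positivity)
    _ ≤ L + δ0 := by
        gcongr
        rw [← ENNReal.ofReal_coe_nnreal]
        exact ENNReal.ofReal_le_ofReal (by linarith)
end

section
/- Let (X, d_X, ν_X) be a compact metric measure space that is the Gromov–Hausdorff–Prokhorov limit of a sequence (X_n, d_{X_n}, ν_{X_n}). Then lim_{ε ↓ 0} λ_ε^X = 0 if and only if lim_{ε ↓ 0} limsup_{n → ∞} λ_ε^{X_n} = 0, where λ_ε^Z := sup_{z ∈ Z} ν_Z(B_ε(z)). -/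
/-! Put both spaces isometrically into a common space at Hausdorff and Lévy–Prokhorov distance
`< δ`. An `ε`-ball of one space carries, up to mass `δ`, no more than its `δ`-thickening does for
the other measure, and that thickening lies in the `(ε + 2δ)`-ball around a point of the other
space within `δ` of the centre. So `λ_ε ≤ λ'_{ε+2δ} + δ` in both directions, and taking `δ = ε`
transfers `λ_ε → 0` between the limit and the `limsup` along the sequence. -/

open MeasureTheory Metric Set Filter

open scoped ENNReal Topology

noncomputable def maxBallMass {X : Type*} [PseudoMetricSpace X] [MeasurableSpace X]
    (μ : Measure X) (ε : ℝ) : ℝ≥0∞ :=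
  ⨆ x, μ (ball x ε)

lemma Isometry.map_apply_ball {A Z : Type*} [PseudoMetricSpace A] [MeasurableSpace A]
    [OpensMeasurableSpace A] [PseudoMetricSpace Z] [MeasurableSpace Z] [BorelSpace Z]
    {φ : A → Z} (hφ : Isometry φ) (μ : Measure A) (a : A) (ε : ℝ) :
    μ.map φ (ball (φ a) ε) = μ (ball a ε) := by
  rw [Measure.map_apply hφ.continuous.measurable measurableSet_ball, hφ.preimage_ball]

lemma measure_ball_le_of_levyProkhorovDist_lt {Z : Type*} [PseudoMetricSpace Z]
    [MeasurableSpace Z] [OpensMeasurableSpace Z] {μ ν : Measure Z} [IsFiniteMeasure μ]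
    [IsFiniteMeasure ν] {δ : ℝ} (h : levyProkhorovDist μ ν < δ) (z : Z) (ε : ℝ) :
    μ (ball z ε) ≤ ν (ball z (δ + ε)) + ENNReal.ofReal δ := by
  have hδ : 0 ≤ δ := ENNReal.toReal_nonneg.trans h.le
  have hE : levyProkhorovEDist μ ν < ENNReal.ofReal δ :=
    (ENNReal.lt_ofReal_iff_toReal_lt (levyProkhorovEDist_ne_top μ ν)).mpr h
  calc μ (ball z ε) ≤ ν (thickening δ (ball z ε)) + ENNReal.ofReal δ := by
        simpa only [ENNReal.toReal_ofReal hδ] using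
          left_measure_le_of_levyProkhorovEDist_lt hE measurableSet_ball
    _ ≤ ν (ball z (δ + ε)) + ENNReal.ofReal δ := by gcongr; exact thickening_ball z δ ε

lemma hausdorffEDist_lt_ofReal_of_hausdorffDist_lt {Z : Type*} [PseudoMetricSpace Z]
    {s t : Set Z} (hs : s.Nonempty) (ht : t.Nonempty) (hs' : Bornology.IsBounded s)
    (ht' : Bornology.IsBounded t) {δ : ℝ} (h : hausdorffDist s t < δ) :
    hausdorffEDist s t < ENNReal.ofReal δ :=
  (ENNReal.lt_ofReal_iff_toReal_lt
    (hausdorffEDist_ne_top_of_nonempty_of_bounded hs ht hs' ht')).mpr h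

lemma maxBallMass_le_of_isometry {A B Z : Type*} [PseudoMetricSpace A] [MeasurableSpace A]
    [OpensMeasurableSpace A] [PseudoMetricSpace B] [MeasurableSpace B] [OpensMeasurableSpace B]
    [PseudoMetricSpace Z] [MeasurableSpace Z] [BorelSpace Z] {μA : Measure A} {μB : Measure B}
    [IsFiniteMeasure μA] [IsFiniteMeasure μB] {φ : A → Z} {ψ : B → Z}
    (hφ : Isometry φ) (hψ : Isometry ψ) {δ : ℝ}
    (hH : hausdorffEDist (range φ) (range ψ) < ENNReal.ofReal δ)
    (hLP : levyProkhorovDist (μA.map φ) (μB.map ψ) < δ) (ε : ℝ) :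
    maxBallMass μA ε ≤ maxBallMass μB (ε + 2 * δ) + ENNReal.ofReal δ := by
  refine iSup_le fun a => ?_
  obtain ⟨_, ⟨b, rfl⟩, hab⟩ :=
    exists_edist_lt_of_hausdorffEDist_lt (mem_range_self a) hH
  have hball : ball (φ a) (δ + ε) ⊆ ball (ψ b) (ε + 2 * δ) :=
    ball_subset_ball' (by linarith [edist_lt_ofReal.mp hab])
  calc μA (ball a ε) = μA.map φ (ball (φ a) ε) := (hφ.map_apply_ball μA a ε).symm
    _ ≤ μB.map ψ (ball (φ a) (δ + ε)) + ENNReal.ofReal δ :=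
        measure_ball_le_of_levyProkhorovDist_lt hLP _ _
    _ ≤ μB.map ψ (ball (ψ b) (ε + 2 * δ)) + ENNReal.ofReal δ := by gcongr
    _ = μB (ball b (ε + 2 * δ)) + ENNReal.ofReal δ := by rw [hψ.map_apply_ball]
    _ ≤ maxBallMass μB (ε + 2 * δ) + ENNReal.ofReal δ := by
        gcongr; exact le_iSup (fun b => μB (ball b (ε + 2 * δ))) b

lemma tendsto_nhdsGT_zero_of_le_comp_mul {f g : ℝ → ℝ≥0∞} {c : ℝ} (hc : 0 < c)
    (hg : Tendsto g (𝓝[>] 0) (𝓝 0))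
    (hfg : ∀ᶠ ε in 𝓝[>] 0, f ε ≤ g (c * ε) + ENNReal.ofReal ε) :
    Tendsto f (𝓝[>] 0) (𝓝 0) := by
  have hscale : Tendsto (c * ·) (𝓝[>] (0 : ℝ)) (𝓝[>] 0) := by
    simpa only [comap_mulLeft_nhdsGT_zero hc] using
      tendsto_comap (f := (c * ·)) (x := 𝓝[>] (0 : ℝ))
  have hofReal : Tendsto ENNReal.ofReal (𝓝[>] 0) (𝓝 0) := by
    simpa using ENNReal.tendsto_ofReal (tendsto_id.mono_left (nhdsWithin_le_nhds (a := (0 : ℝ))))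
  have hbound : Tendsto (fun ε => g (c * ε) + ENNReal.ofReal ε) (𝓝[>] 0) (𝓝 0) := by
    simpa using (hg.comp hscale).add hofReal
  exact tendsto_of_tendsto_of_tendsto_of_le_of_le' tendsto_const_nhds hbound
    (Eventually.of_forall fun _ => zero_le) hfg

section GHP

variable {X : ℕ → Type} [∀ n, MetricSpace (X n)] [∀ n, CompactSpace (X n)]
    [∀ n, MeasurableSpace (X n)] [∀ n, BorelSpace (X n)]
    {μ : ∀ n, Measure (X n)} [∀ n, IsProbabilityMeasure (μ n)]
    {Y : Type} [MetricSpace Y] [CompactSpace Y] [MeasurableSpace Y] [BorelSpace Y]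
    {ν : Measure Y} [IsProbabilityMeasure ν]

lemma GHPTendsto.eventually_maxBallMass_le (hconv : GHPTendsto X μ Y ν) {δ : ℝ} (hδ : 0 < δ)
    (ε : ℝ) :
    ∀ᶠ n in atTop, maxBallMass (μ n) ε ≤ maxBallMass ν (ε + 2 * δ) + ENNReal.ofReal δ ∧
      maxBallMass ν ε ≤ maxBallMass (μ n) (ε + 2 * δ) + ENNReal.ofReal δ := by
  filter_upwards [hconv δ hδ] with n ⟨Z, _, _, _, φ, ψ, hφ, hψ, hH, hLP⟩
  have := nonempty_of_isProbabilityMeasure (μ n)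
  have := nonempty_of_isProbabilityMeasure ν
  have hH' := hausdorffEDist_lt_ofReal_of_hausdorffDist_lt (range_nonempty φ)
    (range_nonempty ψ) (isCompact_range hφ.continuous).isBounded
    (isCompact_range hψ.continuous).isBounded hH
  exact ⟨maxBallMass_le_of_isometry hφ hψ hH' hLP ε,
    maxBallMass_le_of_isometry hψ hφ (by rwa [hausdorffEDist_comm])
      (by rwa [levyProkhorovDist_comm]) ε⟩

lemma GHPTendsto.limsup_maxBallMass_le (hconv : GHPTendsto X μ Y ν) {δ : ℝ} (hδ : 0 < δ)
    (ε : ℝ) :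
    limsup (fun n => maxBallMass (μ n) ε) atTop ≤
      maxBallMass ν (ε + 2 * δ) + ENNReal.ofReal δ :=
  limsup_le_of_le (by isBoundedDefault)
    ((hconv.eventually_maxBallMass_le hδ ε).mono fun _ h => h.1)

lemma GHPTendsto.maxBallMass_le_limsup (hconv : GHPTendsto X μ Y ν) {δ : ℝ} (hδ : 0 < δ)
    (ε : ℝ) :
    maxBallMass ν ε ≤
      limsup (fun n => maxBallMass (μ n) (ε + 2 * δ)) atTop + ENNReal.ofReal δ := by
  rw [← limsup_add_const _ _ _ (by isBoundedDefault) (by isBoundedDefault)]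
  exact le_limsup_of_frequently_le'
    ((hconv.eventually_maxBallMass_le hδ ε).mono fun _ h => h.2).frequently

end GHP

/-- If `(X_n)` converges to `X` in the GHP sense, then `lim_{ε↓0} λ_ε^X = 0` if and only
if `lim_{ε↓0} limsup_n λ_ε^{X_n} = 0`. -/
theorem lambda_tendsto_zero_iff_limsup
    (X : ℕ → Type) [∀ n, MetricSpace (X n)] [∀ n, CompactSpace (X n)]
    [∀ n, MeasurableSpace (X n)] [∀ n, BorelSpace (X n)]
    (μ : ∀ n, Measure (X n)) [∀ n, IsProbabilityMeasure (μ n)]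
    (Y : Type) [MetricSpace Y] [CompactSpace Y] [MeasurableSpace Y] [BorelSpace Y]
    (ν : Measure Y) [IsProbabilityMeasure ν]
    (hconv : GHPTendsto X μ Y ν) :
    Filter.Tendsto (fun ε : ℝ => ⨆ y : Y, ν (Metric.ball y ε))
        (nhdsWithin 0 (Set.Ioi 0)) (nhds 0) ↔
      Filter.Tendsto
        (fun ε : ℝ => Filter.limsup (fun n => ⨆ x : X n, μ n (Metric.ball x ε)) atTop)
        (nhdsWithin 0 (Set.Ioi 0)) (nhds 0) := by
  have h3 (ε : ℝ) : 3 * ε = ε + 2 * ε := by ring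
  constructor
  · refine fun hY => tendsto_nhdsGT_zero_of_le_comp_mul three_pos hY ?_
    filter_upwards [self_mem_nhdsWithin] with ε hε
    rw [h3]
    exact hconv.limsup_maxBallMass_le hε ε
  · refine fun hX => tendsto_nhdsGT_zero_of_le_comp_mul three_pos hX ?_
    filter_upwards [self_mem_nhdsWithin] with ε hε
    rw [h3]
    exact hconv.maxBallMass_le_limsup hε ε
end

section
/- Let (X, d_X, ν_X) and (Y, d_Y, ν_Y) be compact metric spaces with Borel probability measures whose Gromov–Hausdorff–Prokhorov distance is strictly less than ε' > 0. Then for all ε > 0, ρ_ε^X ≤ ρ_{ε+2ε'}^Y + ε', where ρ_ε^Z := inf_{z ∈ Z} ν_Z(C_ε(z)) and C_ε(z) is the closed ε-ball around z. -/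
open MeasureTheory Metric Set

/-!
Embed `X` and `Y` isometrically into a common space `Z` as in the hypothesis. For `y ∈ Y`,
the Hausdorff bound gives `x ∈ X` whose image lies within `ε'` of the image of `y`. The
Lévy–Prokhorov bound moves the `ε`-ball around `φ x` to its `ε'`-thickening at the cost of
`ε'` in mass, and that thickening lies in the `(ε + 2ε')`-ball around `ψ y`; isometries
identify balls in `Z` around image points with balls in `X` and `Y`.
-/

lemma Metric.thickening_closedBall_subset_closedBall {α : Type*} [PseudoMetricSpace α]
    (z : α) (δ r : ℝ) : thickening δ (closedBall z r) ⊆ closedBall z (r + δ) := by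
  intro w hw
  obtain ⟨u, hu, hwu⟩ := mem_thickening_iff.1 hw
  rw [mem_closedBall] at hu ⊢
  linarith [dist_triangle w u z]

section LevyProkhorov

variable {Ω : Type*} [MeasurableSpace Ω] [PseudoMetricSpace Ω]
  {μ ν : Measure Ω} [IsFiniteMeasure μ] [IsFiniteMeasure ν] {δ : ℝ}

lemma levyProkhorovEDist_lt_ofReal (h : levyProkhorovDist μ ν < δ) :
    levyProkhorovEDist μ ν < ENNReal.ofReal δ :=
  (ENNReal.lt_ofReal_iff_toReal_lt (levyProkhorovEDist_ne_top μ ν)).2 h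

lemma measure_closedBall_le_of_levyProkhorovDist_lt [OpensMeasurableSpace Ω]
    (h : levyProkhorovDist μ ν < δ) (z : Ω) (r : ℝ) :
    μ (closedBall z r) ≤ ν (closedBall z (r + δ)) + ENNReal.ofReal δ := by
  have hδ : 0 ≤ δ := ENNReal.toReal_nonneg.trans h.le
  calc μ (closedBall z r)
      ≤ ν (thickening (ENNReal.ofReal δ).toReal (closedBall z r)) + ENNReal.ofReal δ :=
        left_measure_le_of_levyProkhorovEDist_lt (levyProkhorovEDist_lt_ofReal h)
          measurableSet_closedBall
    _ ≤ ν (closedBall z (r + δ)) + ENNReal.ofReal δ := by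
        rw [ENNReal.toReal_ofReal hδ]
        gcongr
        exact thickening_closedBall_subset_closedBall z δ r

end LevyProkhorov

section Isometry

variable {X Y Z : Type*} [MetricSpace X] [MetricSpace Y] [MetricSpace Z]
  [MeasurableSpace X] [BorelSpace X] [MeasurableSpace Y] [BorelSpace Y]
  [MeasurableSpace Z] [BorelSpace Z] {φ : X → Z} {ψ : Y → Z}

lemma Isometry.map_apply_closedBall (hφ : Isometry φ) (νX : Measure X) (x : X) (r : ℝ) :
    νX.map φ (closedBall (φ x) r) = νX (closedBall x r) := by
  rw [Measure.map_apply hφ.continuous.measurable measurableSet_closedBall,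
    hφ.preimage_closedBall]

lemma Isometry.measure_closedBall_le_of_levyProkhorovDist_lt (hφ : Isometry φ)
    (hψ : Isometry ψ) {νX : Measure X} {νY : Measure Y} [IsFiniteMeasure νX]
    [IsFiniteMeasure νY] {δ a : ℝ} (hLP : levyProkhorovDist (νX.map φ) (νY.map ψ) < δ)
    {x : X} {y : Y} (hxy : dist (φ x) (ψ y) ≤ a) (r : ℝ) :
    νX (closedBall x r) ≤ νY (closedBall y (r + δ + a)) + ENNReal.ofReal δ := by
  calc νX (closedBall x r)
      = νX.map φ (closedBall (φ x) r) := (hφ.map_apply_closedBall νX x r).symm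
    _ ≤ νY.map ψ (closedBall (φ x) (r + δ)) + ENNReal.ofReal δ :=
        _root_.measure_closedBall_le_of_levyProkhorovDist_lt hLP (φ x) r
    _ ≤ νY.map ψ (closedBall (ψ y) (r + δ + a)) + ENNReal.ofReal δ := by
        gcongr
        exact closedBall_subset_closedBall' (by linarith)
    _ = νY (closedBall y (r + δ + a)) + ENNReal.ofReal δ := by
        rw [hψ.map_apply_closedBall]

end Isometry

theorem minimal_ball_mass_GHP_bound_general
    (X Y : Type) [MetricSpace X] [CompactSpace X] [MetricSpace Y] [CompactSpace Y]
    [MeasurableSpace X] [BorelSpace X] [MeasurableSpace Y] [BorelSpace Y]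
    (νX : Measure X) (νY : Measure Y)
    [IsProbabilityMeasure νX] [IsProbabilityMeasure νY]
    (ε' : ℝ)
    (h : ∃ (Z : Type) (_ : MetricSpace Z) (_ : MeasurableSpace Z) (_ : BorelSpace Z)
        (φ : X → Z) (ψ : Y → Z), Isometry φ ∧ Isometry ψ ∧
        hausdorffDist (Set.range φ) (Set.range ψ) < ε' ∧
        levyProkhorovDist (νX.map φ) (νY.map ψ) < ε')
    (ε : ℝ) :
    (⨅ x : X, νX (Metric.closedBall x ε)) ≤
      (⨅ y : Y, νY (Metric.closedBall y (ε + 2 * ε'))) + ENNReal.ofReal ε' := by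
  obtain ⟨Z, _, _, _, φ, ψ, hφ, hψ, hH, hLP⟩ := h
  rcases isEmpty_or_nonempty Y with hY | hY
  · simp [iInf_of_empty]
  have := nonempty_of_isProbabilityMeasure νX
  -- without this finiteness `hausdorffDist` would be the junk value `0`
  have hfin : hausdorffEDist (range φ) (range ψ) ≠ ⊤ :=
    hausdorffEDist_ne_top_of_nonempty_of_bounded (range_nonempty φ) (range_nonempty ψ)
      (isCompact_range hφ.continuous).isBounded (isCompact_range hψ.continuous).isBounded
  rw [ENNReal.iInf_add]
  refine le_iInf fun y ↦ ?_
  obtain ⟨_, ⟨x, rfl⟩, hxy⟩ := exists_dist_lt_of_hausdorffDist_lt' (mem_range_self y) hH hfin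
  calc ⨅ x, νX (closedBall x ε)
      ≤ νX (closedBall x ε) := iInf_le _ x
    _ ≤ νY (closedBall y (ε + ε' + ε')) + ENNReal.ofReal ε' :=
        hφ.measure_closedBall_le_of_levyProkhorovDist_lt hψ hLP hxy.le ε
    _ = νY (closedBall y (ε + 2 * ε')) + ENNReal.ofReal ε' := by
        rw [add_assoc, ← two_mul]

/-- If the GHP distance of two compact metric probability spaces is `< ε'`
(witnessed by isometric embeddings into a common space), then the minimal mass of
closed `ε`-balls in `X` is at most that of closed `(ε + 2ε')`-balls in `Y`, plus `ε'`. -/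
theorem minimal_ball_mass_GHP_bound
    (X Y : Type) [MetricSpace X] [CompactSpace X] [MetricSpace Y] [CompactSpace Y]
    [MeasurableSpace X] [BorelSpace X] [MeasurableSpace Y] [BorelSpace Y]
    (νX : Measure X) (νY : Measure Y)
    [IsProbabilityMeasure νX] [IsProbabilityMeasure νY]
    (ε' : ℝ) (hε' : 0 < ε')
    (h : ∃ (Z : Type) (_ : MetricSpace Z) (_ : MeasurableSpace Z) (_ : BorelSpace Z)
        (φ : X → Z) (ψ : Y → Z), Isometry φ ∧ Isometry ψ ∧
        hausdorffDist (Set.range φ) (Set.range ψ) < ε' ∧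
        levyProkhorovDist (νX.map φ) (νY.map ψ) < ε')
    (ε : ℝ) (hε : 0 < ε) :
    (⨅ x : X, νX (Metric.closedBall x ε)) ≤
      (⨅ y : Y, νY (Metric.closedBall y (ε + 2 * ε'))) + ENNReal.ofReal ε' :=
  minimal_ball_mass_GHP_bound_general X Y νX νY ε' h ε
end

section
/- Let (X, d_X, ν_X) be a compact metric space with a Borel probability measure. The function ε ↦ ρ_ε^X := inf_{x ∈ X} ν_X(C_ε(x)) from [0, ∞) to ℝ is monotonically increasing and right-continuous, where C_ε(x) denotes the closed ε-ball around x. -/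
open MeasureTheory Metric Set Filter Topology ENNReal

/-! Since `C_ε(x) = ⋂_{r > ε} C_r(x)`, continuity of `ν` from above makes each `r ↦ ν(C_r(x))`
right-continuous, and an infimum of monotone right-continuous functions is again
right-continuous. -/

theorem tendsto_nhdsGT_iInf_of_monotone {ι α β : Type*} [Preorder α] [TopologicalSpace α]
    [CompleteLinearOrder β] [TopologicalSpace β] [OrderTopology β] {f : ι → α → β}
    (hf : ∀ i, Monotone (f i)) {a : α} (h : ∀ i, Tendsto (f i) (𝓝[>] a) (𝓝 (f i a))) :
    Tendsto (fun t => ⨅ i, f i t) (𝓝[>] a) (𝓝 (⨅ i, f i a)) := by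
  refine tendsto_order.2 ⟨fun b hb => ?_, fun b hb => ?_⟩
  · filter_upwards [self_mem_nhdsWithin] with t (ht : a < t)
    exact hb.trans_le (iInf_mono fun i => hf i ht.le)
  · obtain ⟨i, hi⟩ := iInf_lt_iff.1 hb
    filter_upwards [(h i).eventually (gt_mem_nhds hi)] with t ht
    exact (iInf_le _ i).trans_lt ht

theorem tendsto_measure_closedBall_nhdsGT {X : Type*} [PseudoMetricSpace X] [MeasurableSpace X]
    [OpensMeasurableSpace X] (μ : Measure X) [IsFiniteMeasure μ] (x : X) (ε : ℝ) :
    Tendsto (fun r => μ (closedBall x r)) (𝓝[>] ε) (𝓝 (μ (closedBall x ε))) := by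
  rw [← biInter_gt_closedBall x ε]
  exact tendsto_measure_biInter_gt (fun r _ => measurableSet_closedBall.nullMeasurableSet)
    (fun _ _ _ hij => closedBall_subset_closedBall hij) ⟨ε + 1, by simp, measure_ne_top μ _⟩

theorem rho_monotone_and_right_continuous_general
    (X : Type) [MetricSpace X]
    [MeasurableSpace X] [BorelSpace X]
    (ν : Measure X) [IsProbabilityMeasure ν] :
    MonotoneOn (fun ε : ℝ => (⨅ x : X, ν (Metric.closedBall x ε)).toReal) (Set.Ici 0) ∧
    ∀ ε : ℝ, 0 ≤ ε →
      Filter.Tendsto (fun t : ℝ => (⨅ x : X, ν (Metric.closedBall x t)).toReal)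
        (nhdsWithin ε (Set.Ioi ε))
        (nhds ((⨅ x : X, ν (Metric.closedBall x ε)).toReal)) := by
  have := nonempty_of_isProbabilityMeasure ν
  have hmono (x : X) : Monotone fun r => ν (closedBall x r) :=
    fun _ _ hrs => measure_mono (closedBall_subset_closedBall hrs)
  have hfin (r : ℝ) : ⨅ x : X, ν (closedBall x r) ≠ ∞ :=
    ne_top_of_le_ne_top (measure_ne_top ν _) (iInf_le _ (Classical.arbitrary X))
  refine ⟨fun r _ s _ hrs => toReal_mono (hfin s) (iInf_mono fun x => hmono x hrs),
    fun ε _ => (tendsto_toReal (hfin ε)).comp ?_⟩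
  exact tendsto_nhdsGT_iInf_of_monotone hmono fun x => tendsto_measure_closedBall_nhdsGT ν x ε

/-- For a compact metric probability space, `ε ↦ ρ_ε^X = inf_x ν(C_ε(x))` is
monotonically increasing on `[0, ∞)` and right-continuous there. -/
theorem rho_monotone_and_right_continuous
    (X : Type) [MetricSpace X] [CompactSpace X]
    [MeasurableSpace X] [BorelSpace X]
    (ν : Measure X) [IsProbabilityMeasure ν] :
    MonotoneOn (fun ε : ℝ => (⨅ x : X, ν (Metric.closedBall x ε)).toReal) (Set.Ici 0) ∧
    ∀ ε : ℝ, 0 ≤ ε →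
      Filter.Tendsto (fun t : ℝ => (⨅ x : X, ν (Metric.closedBall x t)).toReal)
        (nhdsWithin ε (Set.Ioi ε))
        (nhds ((⨅ x : X, ν (Metric.closedBall x ε)).toReal)) :=
  rho_monotone_and_right_continuous_general X ν
end

section
/- Suppose (X, d_X, ν_X) is the Gromov–Hausdorff–Prokhorov limit of compact metric measure spaces (X_n, d_{X_n}, ν_{X_n}). Then ν_X has full support if and only if liminf_{n → ∞} ρ_ε^{X_n} > 0 for every ε > 0, where ρ_ε^Z := inf_{z ∈ Z} ν_Z(C_ε(z)) and C_ε(z) is the closed ε-ball. -/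
/-!
If the images of `x` and `y` in a common embedding are `η`-close and the pushforward
measures are `η`-close in the Lévy–Prokhorov metric, then the `η`-thickening of `B(y, r)`
lies in `B(x, r + 2η)`, so `ν (B(y, r)) ≤ μ (B(x, r + 2η)) + η`, and symmetrically. Full
support of `ν` on the compact limit gives a uniform positive lower bound on the masses of
`ε/2`-balls, and the comparison carries it to `ε`-balls of `X n` for large `n`; conversely a
uniform lower bound on the masses of `r/4`-balls of `X n` transfers to `ν (B(y, r)) > 0`.
-/

open MeasureTheory Metric Set Filter

lemma ENNReal.exists_pos_le_ofReal_lt {L : ENNReal} (hL : 0 < L) {s : ℝ} (hs : 0 < s) :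
    ∃ η : ℝ, 0 < η ∧ η ≤ s ∧ ENNReal.ofReal η < L := by
  obtain ⟨δ, -, hδ, hδL⟩ := ENNReal.lt_iff_exists_real_btwn.mp hL
  refine ⟨min δ s, lt_min (ENNReal.ofReal_pos.mp hδ) hs, min_le_right _ _, ?_⟩
  exact (ENNReal.ofReal_le_ofReal (min_le_left _ _)).trans_lt hδL

lemma iInf_measure_closedBall_pos {Y : Type*} [PseudoMetricSpace Y] [CompactSpace Y]
    [MeasurableSpace Y] (ν : Measure Y) [ν.IsOpenPosMeasure] {r : ℝ} (hr : 0 < r) :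
    0 < ⨅ y, ν (closedBall y r) := by
  obtain ⟨t, ht⟩ := isCompact_univ.elim_finite_subcover (fun y : Y => ball y (r / 2))
    (fun _ => isOpen_ball) (fun y _ => mem_iUnion.mpr ⟨y, mem_ball_self (half_pos hr)⟩)
  calc 0 < t.inf fun i => ν (ball i (r / 2)) :=
        (Finset.lt_inf_iff ENNReal.zero_lt_top).mpr fun i _ => measure_ball_pos ν i (half_pos hr)
    _ ≤ ⨅ y, ν (closedBall y r) := le_iInf fun y => by
        obtain ⟨i, hi, hyi⟩ := mem_iUnion₂.mp (ht (mem_univ y))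
        have hiy : r / 2 + dist i y ≤ r := by rw [dist_comm]; linarith [mem_ball.mp hyi]
        exact (Finset.inf_le hi).trans
          (measure_mono ((ball_subset_ball' hiy).trans ball_subset_closedBall))

lemma thickening_closedBall_subset_closedBall {Z : Type*} [PseudoMetricSpace Z] {a b : Z}
    {η r : ℝ} (hab : dist a b < η) :
    thickening η (closedBall b r) ⊆ closedBall a (r + 2 * η) := by
  intro z hz
  obtain ⟨w, hw, hzw⟩ := mem_thickening_iff.mp hz
  rw [mem_closedBall] at hw ⊢
  linarith [dist_triangle4 z w b a, dist_comm a b]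

lemma measure_closedBall_le_of_levyProkhorovDist_lt_s10 {Z : Type*} [PseudoMetricSpace Z]
    [MeasurableSpace Z] [OpensMeasurableSpace Z] {μ ν : Measure Z} [IsFiniteMeasure μ]
    [IsFiniteMeasure ν] {η : ℝ} (hLP : levyProkhorovDist μ ν < η) {a b : Z}
    (hab : dist a b < η) (r : ℝ) :
    ν (closedBall b r) ≤ μ (closedBall a (r + 2 * η)) + ENNReal.ofReal η := by
  have hη : 0 ≤ η := dist_nonneg.trans hab.le
  have hLP' : levyProkhorovEDist μ ν < ENNReal.ofReal η :=
    (ENNReal.lt_ofReal_iff_toReal_lt (levyProkhorovEDist_ne_top μ ν)).mpr hLP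
  calc ν (closedBall b r) ≤ μ (thickening η (closedBall b r)) + ENNReal.ofReal η := by
        simpa only [ENNReal.toReal_ofReal hη] using
          right_measure_le_of_levyProkhorovEDist_lt hLP' measurableSet_closedBall
    _ ≤ μ (closedBall a (r + 2 * η)) + ENNReal.ofReal η := by
        gcongr; exact thickening_closedBall_subset_closedBall hab

lemma Isometry.map_apply_closedBall_s10 {A Z : Type*} [PseudoMetricSpace A] [MeasurableSpace A]
    [OpensMeasurableSpace A] [PseudoMetricSpace Z] [MeasurableSpace Z] [BorelSpace Z]
    {φ : A → Z} (hφ : Isometry φ) (μ : Measure A) (a : A) (r : ℝ) :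
    μ.map φ (closedBall (φ a) r) = μ (closedBall a r) := by
  rw [Measure.map_apply hφ.continuous.measurable measurableSet_closedBall,
    hφ.preimage_closedBall]

lemma exists_measure_closedBall_le_of_isometry {A B Z : Type*}
    [PseudoMetricSpace A] [CompactSpace A] [MeasurableSpace A] [OpensMeasurableSpace A]
    [PseudoMetricSpace B] [CompactSpace B] [MeasurableSpace B] [OpensMeasurableSpace B]
    [PseudoMetricSpace Z] [MeasurableSpace Z] [BorelSpace Z]
    (μ : Measure A) (ν : Measure B) [IsProbabilityMeasure μ] [IsProbabilityMeasure ν]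
    {φ : A → Z} {ψ : B → Z} (hφ : Isometry φ) (hψ : Isometry ψ) {η : ℝ}
    (hH : hausdorffDist (range φ) (range ψ) < η)
    (hLP : levyProkhorovDist (μ.map φ) (ν.map ψ) < η) (a : A) (r : ℝ) :
    ∃ b : B, ν (closedBall b r) ≤ μ (closedBall a (r + 2 * η)) + ENNReal.ofReal η := by
  have := nonempty_of_isProbabilityMeasure ν
  have hfin : hausdorffEDist (range φ) (range ψ) ≠ ⊤ :=
    hausdorffEDist_ne_top_of_nonempty_of_bounded ⟨φ a, mem_range_self a⟩ (range_nonempty ψ)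
      (isCompact_range hφ.continuous).isBounded (isCompact_range hψ.continuous).isBounded
  obtain ⟨_, ⟨b, rfl⟩, hab⟩ := exists_dist_lt_of_hausdorffDist_lt (mem_range_self a) hH hfin
  have := Measure.isProbabilityMeasure_map (μ := μ) hφ.continuous.aemeasurable
  have := Measure.isProbabilityMeasure_map (μ := ν) hψ.continuous.aemeasurable
  refine ⟨b, ?_⟩
  simpa only [hφ.map_apply_closedBall_s10, hψ.map_apply_closedBall_s10] using
    measure_closedBall_le_of_levyProkhorovDist_lt_s10 hLP hab r

section GHPTendsto

variable {X : ℕ → Type} [∀ n, MetricSpace (X n)] [∀ n, CompactSpace (X n)]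
    [∀ n, MeasurableSpace (X n)] [∀ n, BorelSpace (X n)]
    {μ : ∀ n, Measure (X n)} [∀ n, IsProbabilityMeasure (μ n)]
    {Y : Type} [MetricSpace Y] [CompactSpace Y] [MeasurableSpace Y] [BorelSpace Y]
    {ν : Measure Y} [IsProbabilityMeasure ν]

lemma GHPTendsto.eventually_exists_measure_closedBall_le_left (hconv : GHPTendsto X μ Y ν)
    {η : ℝ} (hη : 0 < η) (r : ℝ) :
    ∀ᶠ n in atTop, ∀ x : X n, ∃ y : Y,
      ν (closedBall y r) ≤ μ n (closedBall x (r + 2 * η)) + ENNReal.ofReal η := by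
  filter_upwards [hconv η hη] with n ⟨Z, _, _, _, φ, ψ, hφ, hψ, hH, hLP⟩ x
  exact exists_measure_closedBall_le_of_isometry (μ n) ν hφ hψ hH hLP x r

lemma GHPTendsto.eventually_exists_measure_closedBall_le_right (hconv : GHPTendsto X μ Y ν)
    {η : ℝ} (hη : 0 < η) (r : ℝ) :
    ∀ᶠ n in atTop, ∀ y : Y, ∃ x : X n,
      μ n (closedBall x r) ≤ ν (closedBall y (r + 2 * η)) + ENNReal.ofReal η := by
  filter_upwards [hconv η hη] with n ⟨Z, _, _, _, φ, ψ, hφ, hψ, hH, hLP⟩ y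
  rw [hausdorffDist_comm] at hH
  rw [levyProkhorovDist_comm] at hLP
  exact exists_measure_closedBall_le_of_isometry ν (μ n) hψ hφ hH hLP y r

end GHPTendsto

/-- If `(X_n)` converges to `X` in the GHP sense, then the limit measure has full support
if and only if `liminf_n ρ_ε^{X_n} > 0` for every `ε > 0`. -/
theorem fullSupport_iff_liminf_rho_pos
    (X : ℕ → Type) [∀ n, MetricSpace (X n)] [∀ n, CompactSpace (X n)]
    [∀ n, MeasurableSpace (X n)] [∀ n, BorelSpace (X n)]
    (μ : ∀ n, Measure (X n)) [∀ n, IsProbabilityMeasure (μ n)]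
    (Y : Type) [MetricSpace Y] [CompactSpace Y] [MeasurableSpace Y] [BorelSpace Y]
    (ν : Measure Y) [IsProbabilityMeasure ν]
    (hconv : GHPTendsto X μ Y ν) :
    ν.IsOpenPosMeasure ↔
      ∀ ε : ℝ, 0 < ε →
        0 < Filter.liminf (fun n => ⨅ x : X n, μ n (Metric.closedBall x ε)) atTop := by
  constructor
  · intro _ ε hε
    obtain ⟨η, hη, hηε, hηL⟩ := ENNReal.exists_pos_le_ofReal_lt
      (iInf_measure_closedBall_pos ν (half_pos hε)) (by positivity : 0 < ε / 4)
    have hev : ∀ᶠ n in atTop, (⨅ y : Y, ν (closedBall y (ε / 2))) - ENNReal.ofReal η ≤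
        ⨅ x : X n, μ n (closedBall x ε) := by
      filter_upwards [hconv.eventually_exists_measure_closedBall_le_left hη (ε / 2)] with n hn
      refine le_iInf fun x => tsub_le_iff_right.mpr ?_
      obtain ⟨y, hy⟩ := hn x
      calc ⨅ y : Y, ν (closedBall y (ε / 2)) ≤ ν (closedBall y (ε / 2)) := iInf_le _ y
        _ ≤ μ n (closedBall x (ε / 2 + 2 * η)) + ENNReal.ofReal η := hy
        _ ≤ μ n (closedBall x ε) + ENNReal.ofReal η := by
            gcongr; linarith
    exact (tsub_pos_of_lt hηL).trans_le (le_liminf_of_le (by isBoundedDefault) hev)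
  · refine fun h => ⟨fun U hU ⟨y, hy⟩ => ?_⟩
    obtain ⟨r, hr, hball⟩ := isOpen_iff.mp hU y hy
    obtain ⟨c, hc, hcL⟩ := exists_between (h (r / 4) (by positivity))
    obtain ⟨η, hη, hηr, hηc⟩ := ENNReal.exists_pos_le_ofReal_lt hc (by positivity : 0 < r / 4)
    obtain ⟨n, hρ, hn⟩ := ((eventually_lt_of_lt_liminf hcL).and
      (hconv.eventually_exists_measure_closedBall_le_right hη (r / 4))).exists
    obtain ⟨x, hx⟩ := hn y
    have hlt : ENNReal.ofReal η < ν (closedBall y (r / 4 + 2 * η)) + ENNReal.ofReal η :=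
      calc ENNReal.ofReal η < c := hηc
        _ < μ n (closedBall x (r / 4)) := hρ.trans_le (iInf_le _ x)
        _ ≤ _ := hx
    have hpos : 0 < ν (closedBall y (r / 4 + 2 * η)) :=
      pos_iff_ne_zero.mpr fun h0 => by simp [h0] at hlt
    exact (hpos.trans_le (measure_mono
      ((closedBall_subset_ball (by linarith)).trans hball))).ne'
end
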